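/- arXiv:2206.12960 — 3 statements merged into one kernel-verified Lean document; each statement's English description precedes it below -/
import Mathlib

section
/- Let μ, μ' be strictly monotone maps Fin u → Fin w (respectively Fin u → Fin w') and ν, ν' strictly monotone maps Fin v → Fin w (respectively Fin v → Fin w'), such that range(μ) ∪ range(ν) = Fin w (i.e. all of {0,...,w-1}) and range(μ') ∪ range(ν') covers all of Fin w'. If there exist strictly monotone maps ε : Fin w → Fin W and ε' : Fin w' → Fin W with ε ∘ μ = ε' ∘ μ' and ε ∘ ν = ε' ∘ ν', then w = w', ε = ε', μ = μ' and ν = ν'. -/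
/-! A strictly monotone map out of `Fin w` is determined by its range, and both the width `w`
and the map `ε` can be read off from the range of `ε`. The covering hypotheses say that this
range is the union of the ranges of `ε ∘ μ` and `ε ∘ ν`, which the two saturated data share;
injectivity of `ε` then recovers `μ` and `ν`. -/

open Set

theorem range_eq_of_comp_eq_of_range_union_eq_univ {α β γ ι κ : Type*}
    {μ : ι → α} {ν : κ → α} {μ' : ι → β} {ν' : κ → β} {ε : α → γ} {ε' : β → γ}
    (hcov : range μ ∪ range ν = univ) (hcov' : range μ' ∪ range ν' = univ)
    (h1 : ε ∘ μ = ε' ∘ μ') (h2 : ε ∘ ν = ε' ∘ ν') :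
    range ε = range ε' := by
  rw [← image_univ, ← hcov, image_union, ← range_comp, ← range_comp, h1, h2, range_comp,
    range_comp, ← image_union, hcov', image_univ]

theorem Fin.eq_and_heq_of_strictMono_of_range_eq {w w' : ℕ} {γ : Type*} [Preorder γ]
    {ε : Fin w → γ} {ε' : Fin w' → γ} (hε : StrictMono ε) (hε' : StrictMono ε')
    (h : range ε = range ε') :
    w = w' ∧ HEq ε ε' := by
  have hw : w = w' :=
    calc w = Nat.card (range ε) := by simp [Nat.card_range_of_injective hε.injective]
      _ = Nat.card (range ε') := by rw [h]
      _ = w' := by simp [Nat.card_range_of_injective hε'.injective]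
  subst hw
  exact ⟨rfl, heq_of_eq ((hε.range_inj hε').mp h)⟩

theorem range_union_range_eq_univ_of_image_union_image_eq_univ {α ι κ : Type*} [Fintype ι] [Fintype κ]
    [Fintype α] [DecidableEq α] {μ : ι → α} {ν : κ → α}
    (h : Finset.image μ Finset.univ ∪ Finset.image ν Finset.univ = Finset.univ) :
    Set.range μ ∪ Set.range ν = Set.univ := by
  simpa using congrArg (fun s : Finset α => (s : Set α)) h

theorem stmt_4_general {u v w w' W : ℕ}
    (μ : Fin u → Fin w) (ν : Fin v → Fin w)
    (μ' : Fin u → Fin w') (ν' : Fin v → Fin w')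
    (hcov : Finset.image μ Finset.univ ∪ Finset.image ν Finset.univ = Finset.univ)
    (hcov' : Finset.image μ' Finset.univ ∪ Finset.image ν' Finset.univ = Finset.univ)
    (ε : Fin w → Fin W) (ε' : Fin w' → Fin W)
    (hε : StrictMono ε) (hε' : StrictMono ε')
    (h1 : ε ∘ μ = ε' ∘ μ') (h2 : ε ∘ ν = ε' ∘ ν') :
    w = w' ∧ HEq ε ε' ∧ HEq μ μ' ∧ HEq ν ν' := by
  have hrange : range ε = range ε' :=
    range_eq_of_comp_eq_of_range_union_eq_univ (range_union_range_eq_univ_of_image_union_image_eq_univ hcov)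
      (range_union_range_eq_univ_of_image_union_image_eq_univ hcov') h1 h2
  obtain ⟨rfl, hεε'⟩ := Fin.eq_and_heq_of_strictMono_of_range_eq hε hε' hrange
  cases eq_of_heq hεε'
  exact ⟨rfl, HEq.rfl, heq_of_eq (hε.injective.comp_left h1),
    heq_of_eq (hε.injective.comp_left h2)⟩

theorem stmt_4 {u v w w' W : ℕ}
    (μ : Fin u → Fin w) (ν : Fin v → Fin w)
    (μ' : Fin u → Fin w') (ν' : Fin v → Fin w')
    (hμ : StrictMono μ) (hν : StrictMono ν) (hμ' : StrictMono μ') (hν' : StrictMono ν')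
    (hcov : Finset.image μ Finset.univ ∪ Finset.image ν Finset.univ = Finset.univ)
    (hcov' : Finset.image μ' Finset.univ ∪ Finset.image ν' Finset.univ = Finset.univ)
    (ε : Fin w → Fin W) (ε' : Fin w' → Fin W)
    (hε : StrictMono ε) (hε' : StrictMono ε')
    (h1 : ε ∘ μ = ε' ∘ μ') (h2 : ε ∘ ν = ε' ∘ ν') :
    w = w' ∧ HEq ε ε' ∧ HEq μ μ' ∧ HEq ν ν' :=
  stmt_4_general μ ν μ' ν' hcov hcov' ε ε' hε hε' h1 h2
end

section
/- Let R be a commutative ring, F a finitely generated free R-module with basis e₁,...,eₙ, and φ : F → R an R-linear map such that φ(e₁),...,φ(eₙ) is a regular sequence on R. Then the Koszul complex K(φ) is exact in positive homological degrees, i.e., its homology Hᵢ vanishes for all i ≥ 1. -/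
/-!
Writing `⋀ F` in the basis `e_s = b s₁ ∧ ⋯ ∧ b s_d` (`s₁ < ⋯ < s_d`) turns the Koszul differential
into an explicit differential `diff` on `Finset (Fin n) →₀ R`. Let `K(t)` be the subcomplex spanned
by the `e_s` with `s ⊆ t`; its exactness in positive degrees follows by induction on `t`, adding a
largest index `ℓ`. Every chain of `K(insert ℓ t)` is `a + c ∧ e_ℓ` with `a, c` chains of `K(t)`, and
`d(c ∧ e_ℓ) = ± x_ℓ c + d(c) ∧ e_ℓ`. So for a cycle `a + b ∧ e_ℓ`, `b` is a cycle of `K(t)`, hence a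
boundary `d c`: by induction in positive degree, and in degree `0` because `x_ℓ b` lies in the ideal
`(x_i : i ∈ t)`, modulo which `x_ℓ` is a nonzerodivisor. Subtracting `d(c ∧ e_ℓ)` leaves a cycle
of `K(t)`, which is a boundary by induction.
-/

open ExteriorAlgebra in
/-- The wedge `v 0 ∧ ⋯ ∧ v (d-1)` as an element of the `d`-th exterior power
`⋀[R]^d M` (realized in Mathlib as a submodule of the exterior algebra). -/
noncomputable def wedge (R : Type*) {M : Type*} [CommRing R] [AddCommGroup M] [Module R M]
    (d : ℕ) (v : Fin d → M) : ⋀[R]^d M :=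
  ⟨ιMulti R d v, ιMulti_range R d ⟨v, rfl⟩⟩

lemma wedge_eq_ιMulti {R M : Type*} [CommRing R] [AddCommGroup M] [Module R M] (d : ℕ)
    (v : Fin d → M) : wedge R d v = exteriorPower.ιMulti R d v :=
  rfl

open Finset Finsupp

lemma Finset.sum_sum_erase_eq_zero {α M : Type*} [DecidableEq α] [AddCommGroup M]
    {s : Finset α} {f : α → α → M} (hf : ∀ i ∈ s, ∀ j ∈ s, i ≠ j → f i j = -f j i) :
    ∑ i ∈ s, ∑ j ∈ s.erase i, f i j = 0 := by
  rw [sum_sigma']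
  refine sum_involution (fun p _ => ⟨p.2, p.1⟩) ?_ ?_ ?_ fun _ _ => rfl
  · rintro ⟨i, j⟩ hp
    simp only [mem_sigma, mem_erase] at hp
    rw [hf i hp.1 j hp.2.2 hp.2.1.symm, neg_add_cancel]
  · rintro ⟨i, j⟩ hp - h
    simp only [mem_sigma, mem_erase] at hp
    exact hp.2.1 (congrArg Sigma.fst h)
  · rintro ⟨i, j⟩ hp
    simp only [mem_sigma, mem_erase] at hp ⊢
    exact ⟨hp.2.2, hp.2.1.symm, hp.1⟩

lemma Finsupp.eqOn_supported {α R M : Type*} [Semiring R] [AddCommMonoid M] [Module R M]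
    {S : Set α} {f g : (α →₀ R) →ₗ[R] M} (h : ∀ a ∈ S, f (single a 1) = g (single a 1)) :
    Set.EqOn f g (supported R R S) := by
  rw [supported_eq_span_single]
  exact LinearMap.eqOn_span' (by rintro _ ⟨a, ha, rfl⟩; exact h a ha)

lemma LinearMap.range_eq_ker_of_intertwining {R M₀ M₁ M₂ N : Type*} [Semiring R]
    [AddCommMonoid M₀] [Module R M₀] [AddCommMonoid M₁] [Module R M₁] [AddCommMonoid M₂]
    [Module R M₂] [AddCommMonoid N] [Module R N] {f : M₀ →ₗ[R] M₁} {g : M₁ →ₗ[R] M₂}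
    {D : N →ₗ[R] N} {c₀ : M₀ →ₗ[R] N} {c₁ : M₁ →ₗ[R] N} {c₂ : M₂ →ₗ[R] N}
    (hc₁ : Function.Injective c₁) (hc₂ : Function.Injective c₂)
    (hf : c₁ ∘ₗ f = D ∘ₗ c₀) (hg : c₂ ∘ₗ g = D ∘ₗ c₁) (hD : ∀ z, D (D z) = 0)
    (hexact : ∀ z ∈ LinearMap.range c₁, D z = 0 → ∃ w ∈ LinearMap.range c₀, D w = z) :
    LinearMap.range f = LinearMap.ker g := by
  have hf' (y : M₀) : c₁ (f y) = D (c₀ y) := LinearMap.congr_fun hf y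
  have hg' (y : M₁) : c₂ (g y) = D (c₁ y) := LinearMap.congr_fun hg y
  apply le_antisymm
  · rintro _ ⟨y, rfl⟩
    exact hc₂ (by rw [hg', hf', hD, map_zero])
  · intro y hy
    obtain ⟨_, ⟨y', rfl⟩, hy'⟩ := hexact (c₁ y) ⟨y, rfl⟩ (by rw [← hg', hy, map_zero])
    exact ⟨y', hc₁ (by rw [hf', hy'])⟩

namespace Koszul

variable {ι R : Type*} [CommRing R]

section LinearOrder

variable [LinearOrder ι]

variable (R) in
/-- `single s 1 : Finset ι →₀ R` stands for `e_s`, the wedge of the `e i`, `i ∈ s`, in increasing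
order; `sign R s i` is the sign of moving `e i` to the front of `e_s`. -/
def sign (s : Finset ι) (i : ι) : R := (-1) ^ #{j ∈ s | j < i}

lemma sign_insert {s : Finset ι} {a : ι} (ha : a ∉ s) (i : ι) :
    sign R (insert a s) i = if a < i then -sign R s i else sign R s i := by
  unfold sign
  rw [filter_insert]
  split_ifs
  · rw [card_insert_of_notMem (by simp [ha]), pow_succ, mul_neg_one]
  · rfl

lemma sign_erase {s : Finset ι} {a : ι} (ha : a ∈ s) (i : ι) :
    sign R (s.erase a) i = if a < i then -sign R s i else sign R s i := by
  conv_rhs => rw [← insert_erase ha, sign_insert (notMem_erase a s)]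
  split_ifs <;> simp

lemma sign_mul_sign_erase_antisymm {s : Finset ι} {i j : ι} (hi : i ∈ s) (hj : j ∈ s)
    (hij : i ≠ j) :
    sign R s i * sign R (s.erase i) j = -(sign R s j * sign R (s.erase j) i) := by
  rw [sign_erase hi, sign_erase hj]
  rcases hij.lt_or_gt with h | h <;> simp [h, h.not_gt, mul_comm]

lemma sign_of_forall_lt {s : Finset ι} {ℓ : ι} (h : ∀ i ∈ s, i < ℓ) : sign R s ℓ = (-1) ^ #s := by
  rw [sign, filter_true_of_mem h]

lemma sign_map_orderEmbedding {n : ℕ} (f : Fin n ↪o ι) (j : Fin n) :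
    sign R (univ.map f.toEmbedding) (f j) = (-1) ^ (j : ℕ) := by
  rw [sign, filter_map]
  simp only [Function.comp_def, RelEmbedding.coe_toEmbedding, OrderEmbedding.lt_iff_lt]
  rw [filter_gt_eq_Iio, card_map, Fin.card_Iio]

variable (x : ι → R)

noncomputable def boundary (s : Finset ι) : Finset ι →₀ R :=
  ∑ i ∈ s, (sign R s i * x i) • single (s.erase i) 1

noncomputable def diff : (Finset ι →₀ R) →ₗ[R] Finset ι →₀ R :=
  linearCombination R (boundary x)

@[simp]
lemma diff_single (s : Finset ι) (r : R) : diff x (single s r) = r • boundary x s :=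
  linearCombination_single _ _ _

lemma boundary_singleton (i : ι) : boundary x {i} = single ∅ (x i) := by
  rw [boundary, sum_singleton, erase_singleton, sign, filter_singleton, if_neg (lt_irrefl i),
    card_empty, pow_zero, one_mul, smul_single_one]

lemma diff_boundary (s : Finset ι) : diff x (boundary x s) = 0 := by
  simp only [boundary, map_sum, map_smul, diff_single, Finset.smul_sum, smul_smul]
  refine sum_sum_erase_eq_zero fun i hi j hj hij => ?_
  rw [erase_right_comm, ← neg_smul]
  congr 1
  linear_combination (x i * x j) * sign_mul_sign_erase_antisymm (R := R) hi hj hij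

lemma diff_diff (z : Finset ι →₀ R) : diff x (diff x z) = 0 := by
  induction z using Finsupp.induction_linear with
  | zero => simp
  | add a b ha hb => simp [ha, hb]
  | single s r => simp [diff_boundary]

lemma diff_mem_supported {S S' : Set (Finset ι)} (h : ∀ s ∈ S, ∀ i ∈ s, s.erase i ∈ S')
    {z : Finset ι →₀ R} (hz : z ∈ supported R R S) : diff x z ∈ supported R R S' := by
  suffices supported R R S ≤ (supported R R S').comap (diff x) from this hz
  rw [supported_eq_span_single, Submodule.span_le]
  rintro _ ⟨s, hs, rfl⟩
  simp only [SetLike.mem_coe, Submodule.mem_comap, diff_single, one_smul, boundary]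
  exact sum_mem fun i hi => Submodule.smul_mem _ _ (single_mem_supported R 1 (h s hs i hi))

end LinearOrder

variable (R) in
/-- The degree-`d` term of the Koszul complex of any subfamily `(x i)_{i ∈ t}`. -/
def chains (d : ℕ) (t : Finset ι) : Submodule R (Finset ι →₀ R) :=
  supported R R {s | #s = d ∧ s ⊆ t}

lemma chains_le_supported_subset (d : ℕ) (t : Finset ι) :
    chains R d t ≤ supported R R {s | s ⊆ t} :=
  supported_mono fun _ hs => hs.2

lemma chains_empty (d : ℕ) : chains R (d + 1) (∅ : Finset ι) = ⊥ := by
  rw [chains, supported_eq_span_single, Submodule.span_eq_bot]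
  rintro _ ⟨s, ⟨hcard, hs⟩, rfl⟩
  rw [subset_empty.1 hs, card_empty] at hcard
  exact absurd hcard (Nat.succ_ne_zero d).symm

lemma eq_single_empty_of_mem_chains_zero {t : Finset ι} {b : Finset ι →₀ R}
    (hb : b ∈ chains R 0 t) : b = single ∅ (b ∅) := by
  ext s
  by_cases hs : s = ∅
  · rw [hs, single_eq_same]
  · rw [single_eq_of_ne hs, (mem_supported' R b).1 hb s fun h => hs (card_eq_zero.1 h.1)]

section DecidableEq

variable [DecidableEq ι]

lemma chains_insert {ℓ : ι} {t : Finset ι} (hℓ : ℓ ∉ t) (d : ℕ) :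
    chains R (d + 1) (insert ℓ t) =
      chains R (d + 1) t ⊔ (chains R d t).map (lmapDomain R R (insert ℓ)) := by
  rw [chains, chains, chains, lmapDomain_supported, ← supported_union]
  congr 1
  ext s
  simp only [Set.mem_ofPred_eq, Set.mem_union, Set.mem_image]
  constructor
  · rintro ⟨hcard, hs⟩
    by_cases hℓs : ℓ ∈ s
    · refine Or.inr ⟨s.erase ℓ, ⟨?_, subset_insert_iff.1 hs⟩, insert_erase hℓs⟩
      rw [card_erase_of_mem hℓs, hcard, Nat.add_sub_cancel]
    · exact Or.inl ⟨hcard, (subset_insert_iff_of_notMem hℓs).1 hs⟩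
  · rintro (⟨hcard, hs⟩ | ⟨u, ⟨hcard, hu⟩, rfl⟩)
    · exact ⟨hcard, hs.trans (subset_insert ℓ t)⟩
    · exact ⟨by rw [card_insert_of_notMem fun h => hℓ (hu h), hcard], insert_subset_insert ℓ hu⟩

lemma eq_zero_of_add_lmapDomain_insert_eq_zero {ℓ : ι} {t : Finset ι} (hℓ : ℓ ∉ t)
    {a c : Finset ι →₀ R} (ha : a ∈ supported R R {s | s ⊆ t}) (hc : c ∈ supported R R {s | s ⊆ t})
    (h : a + lmapDomain R R (insert ℓ) c = 0) : c = 0 := by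
  ext s
  by_cases hs : s ⊆ t
  · have hS : (c.support : Set (Finset ι)) ⊆ {u | ℓ ∉ u} := fun u hu h => hℓ (hc hu h)
    have h' := congrArg (· (insert ℓ s)) h
    simp only [Finsupp.add_apply, lmapDomain_apply, Finsupp.zero_apply] at h'
    rwa [(mem_supported' R a).1 ha _ (fun h => hℓ (h (mem_insert_self ℓ s))), zero_add,
      mapDomain_apply' _ c hS (fun u hu v hv huv => ?_) fun h => hℓ (hs h)] at h'
    rw [← erase_insert hu, ← erase_insert hv]
    exact congrArg (·.erase ℓ) huv
  · exact (mem_supported' R c).1 hc s hs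

end DecidableEq

section LinearOrder

variable [LinearOrder ι] (x : ι → R)

lemma diff_mem_chains {d : ℕ} {t : Finset ι} {z : Finset ι →₀ R} (hz : z ∈ chains R (d + 1) t) :
    diff x z ∈ chains R d t :=
  diff_mem_supported x (S' := {s | #s = d ∧ s ⊆ t}) (fun s hs i hi =>
    ⟨by rw [card_erase_of_mem hi, hs.1, Nat.add_sub_cancel], (erase_subset i s).trans hs.2⟩) hz

/-- For `ℓ` above `t`, `lmapDomain (insert ℓ)` is `c ↦ c ∧ e ℓ` on `chains R d t`; this Leibniz rule
exhibits the Koszul complex over `insert ℓ t` as the mapping cone of `x ℓ` on the one over `t`. -/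
lemma diff_lmapDomain_insert {ℓ : ι} {t : Finset ι} (hℓ : ∀ i ∈ t, i < ℓ) {d : ℕ}
    {c : Finset ι →₀ R} (hc : c ∈ chains R d t) :
    diff x (lmapDomain R R (insert ℓ) c) =
      ((-1) ^ d * x ℓ) • c + lmapDomain R R (insert ℓ) (diff x c) := by
  refine eqOn_supported (f := diff x ∘ₗ lmapDomain R R (insert ℓ))
    (g := ((-1) ^ d * x ℓ) • LinearMap.id + lmapDomain R R (insert ℓ) ∘ₗ diff x) ?_ hc
  rintro s ⟨rfl, hs⟩
  have hℓs : ℓ ∉ s := fun h => lt_irrefl ℓ (hℓ ℓ (hs h))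
  simp only [LinearMap.comp_apply, lmapDomain_apply, mapDomain_single, diff_single, one_smul,
    LinearMap.add_apply, LinearMap.smul_apply, LinearMap.id_apply, boundary, map_sum,
    mapDomain_smul, sum_insert hℓs, sign_insert hℓs, lt_irrefl, if_false, erase_insert hℓs,
    sign_of_forall_lt fun i hi => hℓ i (hs hi)]
  congr 1
  refine sum_congr rfl fun i hi => ?_
  rw [if_neg (hℓ i (hs hi)).not_gt, erase_insert_of_ne (hℓ i (hs hi)).ne']

lemma map_diff_chains_one (t : Finset ι) :
    (chains R 1 t).map (diff x) = Submodule.map (lsingle ∅) (Ideal.span (x '' t)) := by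
  rw [chains, supported_eq_span_single, Submodule.map_span, Ideal.span, Submodule.map_span,
    Set.image_image, Set.image_image]
  congr 1
  ext y
  simp only [Set.mem_image, Set.mem_ofPred_eq, card_eq_one]
  constructor
  · rintro ⟨_, ⟨⟨i, rfl⟩, hi⟩, rfl⟩
    exact ⟨i, singleton_subset_iff.1 hi, by simp [boundary_singleton]⟩
  · rintro ⟨i, hi, rfl⟩
    exact ⟨{i}, ⟨⟨i, rfl⟩, singleton_subset_iff.2 hi⟩, by simp [boundary_singleton]⟩

lemma exists_diff_eq_of_mem_chains_zero {t : Finset ι} {r : R}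
    (hr : ∀ β, r * β ∈ Ideal.span (x '' t) → β ∈ Ideal.span (x '' t))
    {a b : Finset ι →₀ R} (ha : a ∈ chains R 1 t) (hb : b ∈ chains R 0 t)
    (h : diff x a + r • b = 0) : ∃ c ∈ chains R 1 t, diff x c = b := by
  have hH₀ := map_diff_chains_one x t
  rw [eq_single_empty_of_mem_chains_zero hb, smul_single, smul_eq_mul] at h
  obtain ⟨β, hβ, hβr⟩ : single ∅ (r * b ∅) ∈ Submodule.map (lsingle ∅) (Ideal.span (x '' t)) := by
    rw [← hH₀, eq_neg_of_add_eq_zero_right h]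
    exact neg_mem (Submodule.mem_map_of_mem ha)
  rw [lsingle_apply, single_injective _ |>.eq_iff] at hβr
  subst hβr
  suffices b ∈ Submodule.map (diff x) (chains R 1 t) from this
  rw [hH₀, eq_single_empty_of_mem_chains_zero hb]
  exact Submodule.mem_map_of_mem (hr _ hβ)

def IsWeaklyRegularOn (t : Finset ι) : Prop :=
  ∀ ℓ ∈ t, ∀ β, x ℓ * β ∈ Ideal.span (x '' ({i ∈ t | i < ℓ} : Finset ι)) →
    β ∈ Ideal.span (x '' ({i ∈ t | i < ℓ} : Finset ι))

variable {x} in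
lemma IsWeaklyRegularOn.of_insert {ℓ : ι} {t : Finset ι} (hℓ : ∀ i ∈ t, i < ℓ)
    (h : IsWeaklyRegularOn x (insert ℓ t)) :
    IsWeaklyRegularOn x t ∧ ∀ β, x ℓ * β ∈ Ideal.span (x '' t) → β ∈ Ideal.span (x '' t) := by
  constructor
  · intro k hk
    have hfilter : {i ∈ insert ℓ t | i < k} = {i ∈ t | i < k} := by
      rw [filter_insert, if_neg (hℓ k hk).not_gt]
    simpa only [hfilter] using h k (mem_insert_of_mem hk)
  · have hfilter : {i ∈ insert ℓ t | i < ℓ} = t := by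
      rw [filter_insert, if_neg (lt_irrefl ℓ), filter_true_of_mem hℓ]
    simpa only [hfilter] using h ℓ (mem_insert_self ℓ t)

theorem exists_diff_eq {t : Finset ι} (hx : IsWeaklyRegularOn x t) {d : ℕ}
    {z : Finset ι →₀ R} (hz : z ∈ chains R (d + 1) t) (hdz : diff x z = 0) :
    ∃ w ∈ chains R (d + 2) t, diff x w = z := by
  induction t using Finset.induction_on_max generalizing d z with
  | empty =>
    rw [chains_empty, Submodule.mem_bot] at hz
    exact ⟨0, zero_mem _, by rw [map_zero, hz]⟩
  | insert ℓ t hℓ ih =>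
    obtain ⟨hxt, hxℓ⟩ := hx.of_insert hℓ
    have hℓt : ℓ ∉ t := fun h => lt_irrefl ℓ (hℓ ℓ h)
    have hsub {e : ℕ} {y : Finset ι →₀ R} (hy : y ∈ chains R e t) :=
      chains_le_supported_subset e t hy
    rw [chains_insert hℓt] at hz
    obtain ⟨a, ha, _, ⟨b, hb, rfl⟩, rfl⟩ := Submodule.mem_sup.1 hz
    rw [map_add, diff_lmapDomain_insert x hℓ hb, ← add_assoc] at hdz
    have hdb : diff x b = 0 := eq_zero_of_add_lmapDomain_insert_eq_zero hℓt
      (add_mem (hsub (diff_mem_chains x ha)) (Submodule.smul_mem _ _ (hsub hb)))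
      (diff_mem_supported x (fun s hs i _ => (erase_subset i s).trans hs) (hsub hb)) hdz
    rw [hdb, map_zero, add_zero] at hdz
    obtain ⟨c, hc, rfl⟩ : ∃ c ∈ chains R (d + 1) t, diff x c = b := by
      cases d with
      | zero => exact exists_diff_eq_of_mem_chains_zero x hxℓ ha hb (by simpa using hdz)
      | succ e => exact ih hxt hb hdb
    obtain ⟨w, hw, hdw⟩ := ih hxt (add_mem ha (Submodule.smul_mem _ ((-1) ^ d * x ℓ) hc))
      (by rw [map_add, map_smul, hdz])
    refine ⟨w + lmapDomain R R (insert ℓ) c, add_mem ?_ ?_, ?_⟩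
    · exact (chains_insert hℓt (d + 1)).ge (Submodule.mem_sup_left hw)
    · exact (chains_insert hℓt (d + 1)).ge (Submodule.mem_sup_right (Submodule.mem_map_of_mem hc))
    · rw [map_add, hdw, diff_lmapDomain_insert x hℓ hc, pow_succ]
      module

end LinearOrder

section ExteriorPower

open exteriorPower

variable {F : Type*} [AddCommGroup F] [Module R F] [LinearOrder ι] (b : Module.Basis ι R F)

lemma map_orderEmbedding_erase {n : ℕ} (f : Fin (n + 1) ↪o ι) (j : Fin (n + 1)) :
    (univ.map f.toEmbedding).erase (f j) =
      univ.map ((Fin.succAboveOrderEmb j).trans f).toEmbedding := by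
  rw [← RelEmbedding.coe_toEmbedding, ← map_erase, ← compl_singleton, ← Fin.image_succAbove_univ,
    map_eq_image, map_eq_image, image_image]
  rfl

noncomputable def coord (d : ℕ) : ⋀[R]^d F →ₗ[R] Finset ι →₀ R :=
  lmapDomain R R Subtype.val ∘ₗ (b.exteriorPower d).repr.toLinearMap

lemma coord_injective (d : ℕ) : Function.Injective (coord b d) :=
  (mapDomain_injective Subtype.val_injective).comp (b.exteriorPower d).repr.injective

lemma range_coord (d : ℕ) : LinearMap.range (coord b d) = supported R R {s | #s = d} := by
  rw [coord, LinearMap.range_comp_of_range_eq_top _ (LinearEquiv.range _), range_lmapDomain,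
    supported_eq_span_single]
  congr 1
  ext
  simp [Set.powersetCard.mem_iff]

lemma coord_ιMulti {d : ℕ} (f : Fin d ↪o ι) :
    coord b d (ιMulti R d (b ∘ f)) = single (univ.map f.toEmbedding) 1 := by
  have : ιMulti R d (b ∘ f) = b.exteriorPower d (Set.powersetCard.ofFinEmbEquiv f) := by
    rw [basis_apply, ιMulti_family, Equiv.symm_apply_apply]
  rw [this, coord, LinearMap.comp_apply, LinearEquiv.coe_coe, Module.Basis.repr_self,
    lmapDomain_apply, mapDomain_single, Set.powersetCard.ofFinEmbEquiv_apply,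
    Set.powersetCard.val_ofFinEmb]

lemma coord_comp_eq_diff_comp (φ : F →ₗ[R] R) (dK : ∀ d : ℕ, (⋀[R]^(d+1) F) →ₗ[R] (⋀[R]^d F))
    (hdK : ∀ (d : ℕ) (v : Fin (d+1) → F),
      dK d (wedge R (d+1) v) =
        ∑ j : Fin (d+1), ((-1 : R)^(j : ℕ) * φ (v j)) • wedge R d (fun k => v (j.succAbove k)))
    (d : ℕ) : coord b d ∘ₗ dK d = diff (fun i => φ (b i)) ∘ₗ coord b (d + 1) := by
  refine (b.exteriorPower (d + 1)).ext fun s => ?_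
  set f := Set.powersetCard.ofFinEmbEquiv.symm s
  have hs : b.exteriorPower (d + 1) s = wedge R (d + 1) (b ∘ f) := by rw [basis_apply]; rfl
  rw [LinearMap.comp_apply, LinearMap.comp_apply, hs, hdK, wedge_eq_ιMulti, coord_ιMulti,
    diff_single, one_smul, boundary, sum_map, map_sum]
  refine sum_congr rfl fun j _ => ?_
  rw [map_smul, wedge_eq_ιMulti, RelEmbedding.coe_toEmbedding, sign_map_orderEmbedding,
    map_orderEmbedding_erase, ← coord_ιMulti b]
  rfl

theorem range_eq_ker [Fintype ι] (φ : F →ₗ[R] R)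
    (hφ : IsWeaklyRegularOn (fun i => φ (b i)) univ)
    (dK : ∀ d : ℕ, (⋀[R]^(d+1) F) →ₗ[R] (⋀[R]^d F))
    (hdK : ∀ (d : ℕ) (v : Fin (d+1) → F),
      dK d (wedge R (d+1) v) =
        ∑ j : Fin (d+1), ((-1 : R)^(j : ℕ) * φ (v j)) • wedge R d (fun k => v (j.succAbove k)))
    (d : ℕ) : LinearMap.range (dK (d + 1)) = LinearMap.ker (dK d) := by
  have hchains (e : ℕ) : LinearMap.range (coord b e) = chains R e univ := by
    simp only [range_coord, chains, subset_univ, and_true]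
  refine LinearMap.range_eq_ker_of_intertwining (coord_injective b _) (coord_injective b _)
    (coord_comp_eq_diff_comp b φ dK hdK _) (coord_comp_eq_diff_comp b φ dK hdK _)
    (diff_diff _) fun z hz hdz => ?_
  rw [hchains] at hz ⊢
  exact exists_diff_eq _ hφ hz hdz

end ExteriorPower

lemma isWeaklyRegularOn_univ_of_isWeaklyRegular {R : Type*} [CommRing R] {n : ℕ} {x : Fin n → R}
    (hx : RingTheory.Sequence.IsWeaklyRegular R (List.ofFn x)) : IsWeaklyRegularOn x univ := by
  intro ℓ _ β hβ
  have hreg := hx.regular_mod_prev ℓ (by simp)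
  have hideal : (Ideal.ofList ((List.ofFn x).take ℓ) • ⊤ : Submodule R R) =
      Ideal.span (x '' ({i ∈ univ | i < ℓ} : Finset (Fin n))) := by
    rw [smul_eq_mul, Ideal.mul_top, ← Fin.ofFn_take_eq_take_ofFn ℓ.isLt.le]
    refine congrArg Ideal.span (Set.ext fun r => ?_)
    simp only [List.mem_ofFn', Set.mem_range, Fin.take, coe_filter, mem_univ, true_and,
      Set.mem_image, Set.mem_ofPred_eq]
    exact ⟨fun ⟨i, hi⟩ => ⟨_, i.isLt, hi⟩,
      fun ⟨i, hi, hr⟩ => ⟨⟨i, hi⟩, hr⟩⟩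
  rw [hideal, List.getElem_ofFn] at hreg
  exact mem_of_isSMulRegular_quotient_of_smul_mem hreg hβ

end Koszul

/-- If `φ : F → R` is a linear map from a finite free `R`-module sending a basis to a
regular sequence, then the Koszul complex `K(φ)` (whose `d`-th term is `⋀^d F` and whose
differentials are given by the usual Koszul formula) is exact in all positive homological
degrees. -/
theorem stmt_5 {R F : Type*} [CommRing R] [AddCommGroup F] [Module R F] {n : ℕ}
    (b : Module.Basis (Fin n) R F) (φ : F →ₗ[R] R)
    (hreg : RingTheory.Sequence.IsRegular R (List.ofFn fun i => φ (b i)))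
    (dK : ∀ d : ℕ, (⋀[R]^(d+1) F) →ₗ[R] (⋀[R]^d F))
    (hdK : ∀ (d : ℕ) (v : Fin (d+1) → F),
      dK d (wedge R (d+1) v) =
        ∑ j : Fin (d+1), ((-1 : R)^(j : ℕ) * φ (v j)) •
          wedge R d (fun k => v (j.succAbove k))) :
    ∀ d : ℕ, LinearMap.range (dK (d+1)) = LinearMap.ker (dK d) :=
  Koszul.range_eq_ker b φ
    (Koszul.isWeaklyRegularOn_univ_of_isWeaklyRegular hreg.toIsWeaklyRegular) dK hdK
end

section
/- For natural numbers d ≥ 1 and i ≥ 0, the number of subsets of size i of the set of strictly monotone maps Fin d → Fin w, summed appropriately, satisfies: ((w choose d) choose i) = Σ_{v} c_v · (w choose v), where c_v is the number of i-element sets {ε₁ < ⋯ < ε_i} of strictly monotone maps Fin d → Fin v whose images jointly cover Fin v; the sum ranges over v with w₀ ≤ v ≤ d·i, where w₀ = min{v : (v choose d) ≥ i}, and this holds for all w ≥ 0. -/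
/-!
Sort the `i`-element sets of strictly monotone maps `Fin d → Fin w`, of which there are
`((w choose d) choose i)`, by the union `T` of their images. Composing with the increasing
enumeration `Fin #T ↪o Fin w` of `T` identifies those with union `T` with the families counted
by `c #T`, so the total is `Σ_T c #T = Σ_v (w choose v) c v`. A covering family of size `i`
in `Fin v` satisfies `i ≤ (v choose d)` and `v ≤ d i`, which confines the sum to `[w₀, d i]`.
-/

open Finset

theorem OrderEmbedding.strictMono_comp_iff {ι α β : Type*} [Preorder ι] [Preorder α]
    [Preorder β] (e : α ↪o β) {f : ι → α} : StrictMono (e ∘ f) ↔ StrictMono f :=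
  ⟨fun h _ _ hab => e.lt_iff_lt.1 (h hab), e.strictMono.comp⟩

theorem Nat.card_strictMono_fin (d : ℕ) (α : Type*) [LinearOrder α] :
    Nat.card {f : Fin d → α // StrictMono f} = (Nat.card α).choose d := by
  let e : {f : Fin d → α // StrictMono f} ≃ (Fin d ↪o α) :=
    { toFun := fun f => OrderEmbedding.ofStrictMono f.1 f.2
      invFun := fun e => ⟨e, e.strictMono⟩
      left_inv := fun _ => rfl
      right_inv := fun _ => rfl }
  rw [Nat.card_congr (e.trans Set.powersetCard.ofFinEmbEquiv), Set.powersetCard.card]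

theorem card_filter_strictMono_fin (d : ℕ) (α : Type*) [LinearOrder α] [Fintype α]
    [DecidablePred (StrictMono : (Fin d → α) → Prop)] :
    #{f : Fin d → α | StrictMono f} = (Fintype.card α).choose d := by
  rw [← Fintype.card_subtype, ← Nat.card_eq_fintype_card, Nat.card_strictMono_fin,
    Nat.card_eq_fintype_card]

section CoveringFamilies

variable {ι α β : Type*}

def jointRange [Fintype ι] [DecidableEq α] (S : Finset (ι → α)) : Finset α :=
  S.biUnion fun f => univ.image f

def coveringFamilies (ι α : Type*) [Preorder ι] [Preorder α] (i : ℕ) : Set (Finset (ι → α)) :=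
  {S | S.card = i ∧ (∀ f ∈ S, StrictMono f) ∧ ∀ x, ∃ f ∈ S, ∃ y, f y = x}

theorem jointRange_eq_univ_iff [Fintype ι] [Fintype α] [DecidableEq α] {S : Finset (ι → α)} :
    jointRange S = univ ↔ ∀ x, ∃ f ∈ S, ∃ y, f y = x := by
  simp [jointRange, eq_univ_iff_forall]

theorem jointRange_map_arrowCongrRight [Fintype ι] [DecidableEq α] [DecidableEq β]
    (e : α ↪ β) (S : Finset (ι → α)) :
    jointRange (S.map e.arrowCongrRight) = (jointRange S).map e := by
  ext
  simp [jointRange]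

theorem mem_coveringFamilies_iff_map [Fintype ι] [Preorder ι] [Preorder α] [Fintype α]
    [Preorder β] [DecidableEq α] [DecidableEq β] (e : α ↪o β) {i : ℕ} {S : Finset (ι → α)} :
    S ∈ coveringFamilies ι α i ↔
      (S.map e.toEmbedding.arrowCongrRight).card = i ∧
      (∀ f ∈ S.map e.toEmbedding.arrowCongrRight, StrictMono f) ∧
      jointRange (S.map e.toEmbedding.arrowCongrRight) = univ.map e.toEmbedding := by
  rw [jointRange_map_arrowCongrRight, map_inj, jointRange_eq_univ_iff, card_map]
  simp [coveringFamilies, Function.Embedding.arrowCongrRight_apply, e.strictMono_comp_iff]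

theorem subset_map_arrowCongrRight_of_jointRange_subset [Fintype ι] [DecidableEq ι] [Fintype α]
    [DecidableEq β] (e : α ↪ β) {S : Finset (ι → β)} (hS : jointRange S ⊆ univ.map e) :
    S ⊆ univ.map e.arrowCongrRight := by
  intro f hf
  have : ∀ y, ∃ a, e a = f y := fun y => by
    simpa using hS (mem_biUnion.2 ⟨f, hf, mem_image_of_mem f (mem_univ y)⟩)
  choose g hg using this
  exact mem_map.2 ⟨g, mem_univ g, funext hg⟩

theorem card_filter_jointRange_eq_map [Fintype ι] [DecidableEq ι] [Preorder ι] [Preorder α]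
    [Fintype α] [Preorder β] [Fintype β] [DecidableEq β] (e : α ↪o β) (i : ℕ)
    [DecidablePred (StrictMono : (ι → β) → Prop)] :
    #{S ∈ powersetCard i {f : ι → β | StrictMono f} | jointRange S = univ.map e.toEmbedding} =
      Nat.card (coveringFamilies ι α i) := by
  classical
  have hfiber :
      {S ∈ powersetCard i {f : ι → β | StrictMono f} | jointRange S = univ.map e.toEmbedding} =
        (univ.filter (· ∈ coveringFamilies ι α i)).map
          (mapEmbedding e.toEmbedding.arrowCongrRight).toEmbedding := by
    ext S'
    simp only [mem_filter, mem_powersetCard, mem_map, mem_univ, true_and]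
    constructor
    · rintro ⟨⟨hsub, hcard⟩, hrange⟩
      obtain ⟨S, -, rfl⟩ := subset_map_iff.1
        (subset_map_arrowCongrRight_of_jointRange_subset e.toEmbedding hrange.subset)
      refine ⟨S, (mem_coveringFamilies_iff_map e).2 ⟨hcard, fun f hf => ?_, hrange⟩, rfl⟩
      simpa using hsub hf
    · rintro ⟨S, hS, rfl⟩
      obtain ⟨hcard, hmono, hrange⟩ := (mem_coveringFamilies_iff_map e).1 (by simpa using hS)
      exact ⟨⟨fun f hf => by simpa using hmono f hf, hcard⟩, hrange⟩
  rw [hfiber, card_map, Nat.card_eq_fintype_card, Fintype.card_subtype]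

theorem card_le_choose_of_mem_coveringFamilies [LinearOrder α] [Fintype α] {d i : ℕ}
    {S : Finset (Fin d → α)} (hS : S ∈ coveringFamilies (Fin d) α i) :
    i ≤ (Fintype.card α).choose d := by
  classical
  rw [← hS.1, ← card_filter_strictMono_fin]
  exact card_le_card fun f hf => by simpa using hS.2.1 f hf

theorem card_le_mul_of_mem_coveringFamilies [Fintype ι] [Preorder ι] [Preorder α] [Fintype α]
    {i : ℕ} {S : Finset (ι → α)} (hS : S ∈ coveringFamilies ι α i) :
    Fintype.card α ≤ i * Fintype.card ι := by
  classical
  calc Fintype.card α = #(jointRange S) := by rw [jointRange_eq_univ_iff.2 hS.2.2, card_univ]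
    _ ≤ #S * Fintype.card ι :=
      card_biUnion_le_card_mul _ _ _ fun f _ => card_image_le.trans_eq card_univ
    _ = i * Fintype.card ι := by rw [hS.1]

end CoveringFamilies

theorem stmt_9_general (d i : ℕ) (c : ℕ → ℕ)
    (hc : ∀ v, c v = Nat.card {S : Finset (Fin d → Fin v) //
      S.card = i ∧ (∀ f ∈ S, StrictMono f) ∧ ∀ x : Fin v, ∃ f ∈ S, ∃ y, f y = x})
    (w₀ : ℕ) (hw₀ : w₀ = sInf {v : ℕ | i ≤ Nat.choose v d}) :
    ∀ w : ℕ, Nat.choose (Nat.choose w d) i =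
      ∑ v ∈ Finset.Icc w₀ (d * i), c v * Nat.choose w v := by
  intro w
  classical
  have hc' : ∀ v, c v = Nat.card (coveringFamilies (Fin d) (Fin v) i) := hc
  have hsupport : ∀ v, c v ≠ 0 → v ∈ Icc w₀ (d * i) := by
    intro v hv
    obtain ⟨⟨S, hS⟩, -⟩ := Nat.card_ne_zero.1 (hc' v ▸ hv)
    have hchoose := card_le_choose_of_mem_coveringFamilies hS
    have hmul := card_le_mul_of_mem_coveringFamilies hS
    simp only [Fintype.card_fin] at hchoose hmul
    exact mem_Icc.2 ⟨hw₀ ▸ Nat.sInf_le hchoose, mul_comm i d ▸ hmul⟩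
  calc (w.choose d).choose i = #(powersetCard i {f : Fin d → Fin w | StrictMono f}) := by
        rw [card_powersetCard, card_filter_strictMono_fin, Fintype.card_fin]
    _ = ∑ T : Finset (Fin w),
          #{S ∈ powersetCard i {f : Fin d → Fin w | StrictMono f} | jointRange S = T} :=
        card_eq_sum_card_fiberwise fun _ _ => mem_univ _
    _ = ∑ T : Finset (Fin w), c #T := by
        refine sum_congr rfl fun T _ => ?_
        rw [hc', ← card_filter_jointRange_eq_map (T.orderEmbOfFin rfl), map_orderEmbOfFin_univ]
    _ = ∑ v ∈ range (w + 1), w.choose v * c v := by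
        rw [← powerset_univ, sum_powerset_apply_card, card_univ, Fintype.card_fin]
        simp only [smul_eq_mul]
    _ = ∑ v ∈ Icc w₀ (d * i), c v * w.choose v := by
        simp_rw [← sum_filter_ne_zero (s := range _), ← sum_filter_ne_zero (s := Icc _ _),
          mul_comm]
        congr 1
        ext v
        simp only [mem_filter, mem_range, ne_eq, mul_eq_zero, Nat.choose_eq_zero_iff, not_or,
          not_lt]
        exact ⟨fun ⟨_, hv, hw⟩ => ⟨hsupport v hv, hv, hw⟩, fun ⟨_, hv, hw⟩ => ⟨by omega, hv, hw⟩⟩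

/-- Rank identity for the decomposition of the `i`-th exterior power of the rank-1 free
OI-module `F^{OI,d}`: `((w choose d) choose i) = Σ_v c_v (w choose v)`, where `c_v` counts
`i`-element sets of strictly monotone maps `Fin d → Fin v` whose images jointly cover
`Fin v`, and `v` ranges from `w₀ = min {v : (v choose d) ≥ i}` to `d·i`. -/
theorem stmt_9 (d i : ℕ) (hd : 1 ≤ d) (c : ℕ → ℕ)
    (hc : ∀ v, c v = Nat.card {S : Finset (Fin d → Fin v) //
      S.card = i ∧ (∀ f ∈ S, StrictMono f) ∧ ∀ x : Fin v, ∃ f ∈ S, ∃ y, f y = x})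
    (w₀ : ℕ) (hw₀ : w₀ = sInf {v : ℕ | i ≤ Nat.choose v d}) :
    ∀ w : ℕ, Nat.choose (Nat.choose w d) i =
      ∑ v ∈ Finset.Icc w₀ (d * i), c v * Nat.choose w v :=
  stmt_9_general d i c hc w₀ hw₀
end
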